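/- Define P^u_d(m) = Σ_{k=0}^{d-m} C(d-m,k) · ∏_{i=0}^{k-1}(m+i+1-r)(i+r) · ∏_{j=k+1}^{d-m}(d-m+r-j)(u+r+j). Then for all natural numbers u, d, m with 1 ≤ m ≤ min(u,d), one has (u+d)(u-m+r)·P^u_d(m) = (u-m)(u+d-m+r)·P^{u-1}_d(m) + d(u-m+2r)·P^u_{d-1}(m-1), as polynomials in r. -/

import Mathlib

/-!
Write `n = d - m`, `x^(k) = x(x+1)⋯(x+k-1)`, and let `T_{U,M}(k)` be the `k`-th summand of `P` with
`u` and `m` replaced by arbitrary ring elements `U` and `M`. Reflecting and shifting the second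
product gives `T_{U,M}(k) = C(n,k) (M+1-r)^(k) r^(k) r^(n-k) (U+r+k+1)^(n-k)`, so `T_{U-1,M}(k)` and
`T_{U,M-1}(k)` differ from `T_{U,M}(k)` by one boundary factor of a rising factorial. The recurrence
is then a Wilf–Zeilberger identity: termwise, left side minus right side equals `F(k) - F(k+1)` for
the certificate `F(0) = 0`, `F(k+1) = (n-k)(r+k) T_{U,M}(k)`, and the sum telescopes to `-F(n+1) = 0`.
In the code `T_{U,M}(k)` is `pTerm n U M r k` and `F(k+1)` is `pFlux n U M r k`.
-/

open Polynomial Finset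

/-- `P u d m = Σ_{k=0}^{d-m} C(d-m,k) · ∏_{i=0}^{k-1}(m+i+1-r)(i+r)
· ∏_{j=k+1}^{d-m}(d-m+r-j)(u+r+j)`, a polynomial in the indeterminate `r = X` over `ℚ`. -/
noncomputable def P (u d m : ℕ) : Polynomial ℚ :=
  ∑ k ∈ Finset.range (d - m + 1),
    ((d - m).choose k : ℚ[X]) *
      (∏ i ∈ Finset.range k, (((m : ℚ[X]) + (i : ℚ[X]) + 1 - X) * ((i : ℚ[X]) + X))) *
      ∏ j ∈ Finset.Icc (k + 1) (d - m),
        ((((d - m : ℕ) : ℚ[X]) + X - (j : ℚ[X])) * ((u : ℚ[X]) + X + (j : ℚ[X])))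

/-- `ψ k x = ∏_{i=1}^{k} (x+i)(i-1+2r)`. -/
noncomputable def psi (k : ℕ) (x : Polynomial ℚ) : Polynomial ℚ :=
  ∏ i ∈ Finset.Icc 1 k, ((x + (i : ℚ[X])) * ((i : ℚ[X]) - 1 + 2 * X))

section

variable {R : Type*} [CommRing R]

theorem ascPochhammer_eval_eq_prod_range (x : R) (n : ℕ) :
    (ascPochhammer R n).eval x = ∏ i ∈ range n, (x + i) := by
  induction n with
  | zero => simp
  | succ n ih => rw [ascPochhammer_succ_eval, ih, prod_range_succ]

theorem ascPochhammer_succ_eval_left (x : R) (n : ℕ) :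
    (ascPochhammer R (n + 1)).eval x = x * (ascPochhammer R n).eval (x + 1) := by
  rw [ascPochhammer_succ_left, eval_mul, eval_comp]
  simp

def pTerm (n : ℕ) (U M r : R) (k : ℕ) : R :=
  (n.choose k : R) * (∏ i ∈ range k, ((M + i + 1 - r) * (i + r))) *
    ∏ j ∈ Icc (k + 1) n, ((n + r - j) * (U + r + j))

theorem pTerm_eq_ascPochhammer (n : ℕ) (U M r : R) (k : ℕ) :
    pTerm n U M r k = n.choose k * (ascPochhammer R k).eval (M + 1 - r) *
      (ascPochhammer R k).eval r * (ascPochhammer R (n - k)).eval r *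
      (ascPochhammer R (n - k)).eval (U + r + k + 1) := by
  have hreflect : ∏ j ∈ Icc (k + 1) n, ((n : R) + r - j) = ∏ i ∈ range (n - k), (r + i) := by
    calc ∏ j ∈ Icc (k + 1) n, ((n : R) + r - j)
        = ∏ j ∈ Ico (k + 1) (n + 1), (r + ((n - j : ℕ) : R)) := by
          rw [← Ico_add_one_right_eq_Icc]
          refine prod_congr rfl fun j hj => ?_
          rw [Nat.cast_sub (Nat.lt_succ_iff.1 (mem_Ico.1 hj).2)]
          ring
      _ = ∏ i ∈ Ico (n + 1 - (n + 1)) (n + 1 - (k + 1)), (r + (i : R)) :=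
          prod_Ico_reflect (fun i : ℕ => r + (i : R)) (k + 1) le_rfl
      _ = _ := by simp
  have hshift : ∏ j ∈ Icc (k + 1) n, (U + r + j) = ∏ i ∈ range (n - k), (U + r + k + 1 + i) := by
    rw [← Ico_add_one_right_eq_Icc, prod_Ico_eq_prod_range, Nat.add_sub_add_right]
    refine prod_congr rfl fun i _ => ?_
    push_cast; ring
  simp only [pTerm, prod_mul_distrib, hreflect, hshift, ascPochhammer_eval_eq_prod_range]
  rw [prod_congr rfl fun (i : ℕ) _ => show M + i + 1 - r = M + 1 - r + i by ring,
    prod_congr rfl fun (i : ℕ) _ => add_comm (i : R) r]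
  ring

theorem pTerm_zero (n : ℕ) (U M r : R) :
    pTerm n U M r 0 = (ascPochhammer R n).eval r * (ascPochhammer R n).eval (U + r + 1) := by
  simp [pTerm_eq_ascPochhammer]

theorem add_mul_pTerm_sub_one (U M r : R) {n k : ℕ} (hk : k ≤ n) :
    (U + n + r) * pTerm n (U - 1) M r k = (U + r + k) * pTerm n U M r k := by
  obtain ⟨l, rfl⟩ := Nat.exists_eq_add_of_le hk
  have h := ascPochhammer_succ_eval_left (U + r + k) l
  rw [ascPochhammer_succ_eval] at h
  rw [pTerm_eq_ascPochhammer, pTerm_eq_ascPochhammer, Nat.add_sub_cancel_left, show U - 1 + r + k + 1 = U + r + k by ring]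
  push_cast
  linear_combination ((k + l).choose k * (ascPochhammer R k).eval (M + 1 - r) *
    (ascPochhammer R k).eval r * (ascPochhammer R l).eval r) * h

def pFlux (n : ℕ) (U M r : R) (k : ℕ) : R := ((n - k : ℕ) : R) * (r + k) * pTerm n U M r k

def pDefect (n : ℕ) (U M r : R) (k : ℕ) : R :=
  (U + (M + n)) * (U - M + r) * pTerm n U M r k - (U - M) * (U + n + r) * pTerm n (U - 1) M r k
    - (M + n) * (U - M + 2 * r) * pTerm n U (M - 1) r k

theorem pDefect_zero (n : ℕ) (U M r : R) : pDefect n U M r 0 = -pFlux n U M r 0 := by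
  have h := add_mul_pTerm_sub_one U M r (Nat.zero_le n)
  simp only [pDefect, pFlux, pTerm_zero, Nat.sub_zero, Nat.cast_zero, add_zero] at h ⊢
  linear_combination (M - U) * h

theorem pDefect_succ (U M r : R) {n j : ℕ} (hj : j < n) :
    pDefect n U M r (j + 1) = pFlux n U M r j - pFlux n U M r (j + 1) := by
  obtain ⟨l, rfl⟩ := Nat.exists_eq_add_of_lt hj
  -- the common factor of `T_{U,M}(j+1)`, `T_{U,M-1}(j+1)` and `F(j+1)`
  set G := ((j + l + 1).choose (j + 1) : R) * (ascPochhammer R j).eval (M + 1 - r) *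
    (ascPochhammer R (j + 1)).eval r * (ascPochhammer R l).eval r *
    (ascPochhammer R l).eval (U + r + (j + 1 : ℕ) + 1) with hG
  have hT : pTerm (j + l + 1) U M r (j + 1) = (M + 1 - r + j) * G := by
    rw [pTerm_eq_ascPochhammer, show j + l + 1 - (j + 1) = l by omega, ascPochhammer_succ_eval]
    ring
  have hTM : pTerm (j + l + 1) U (M - 1) r (j + 1) = (M - r) * G := by
    rw [pTerm_eq_ascPochhammer, show j + l + 1 - (j + 1) = l by omega, ascPochhammer_succ_eval_left,
      show M - 1 + 1 - r = M - r by ring, show M - r + 1 = M + 1 - r by ring]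
    ring
  have hFlux : pFlux (j + l + 1) U M r j = (j + 1) * (r + l) * (U + r + (j + 1 : ℕ)) * G := by
    have hc := Nat.choose_succ_right_eq (j + l + 1) j
    rw [show j + l + 1 - j = l + 1 by omega] at hc
    rw [pFlux, pTerm_eq_ascPochhammer, show j + l + 1 - j = l + 1 by omega, ascPochhammer_succ_eval l r,
      ascPochhammer_succ_eval_left _ l, hG, ascPochhammer_succ_eval j r,
      show U + r + j + 1 + 1 = U + r + (j + 1 : ℕ) + 1 by push_cast; ring]
    have hc' := congrArg (Nat.cast : ℕ → R) hc
    push_cast at hc' ⊢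
    linear_combination (-(r + j) * (r + l) * (U + r + j + 1) * (ascPochhammer R j).eval (M + 1 - r) *
      (ascPochhammer R j).eval r * (ascPochhammer R l).eval r *
      (ascPochhammer R l).eval (U + r + (j + 1) + 1)) * hc'
  have ha := add_mul_pTerm_sub_one U M r (n := j + l + 1) (k := j + 1) (by omega)
  rw [hT] at ha
  rw [pDefect, hFlux, pFlux, hT, hTM, show j + l + 1 - (j + 1) = l by omega]
  push_cast at ha ⊢
  linear_combination (M - U) * ha

theorem sum_pDefect (n : ℕ) (U M r : R) : ∑ k ∈ range (n + 1), pDefect n U M r k = 0 := by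
  rw [sum_range_succ', pDefect_zero,
    sum_congr rfl fun j hj => pDefect_succ U M r (mem_range.1 hj), sum_range_sub']
  simp [pFlux]

theorem sum_pTerm_recurrence (n : ℕ) (U M r : R) :
    (U + (M + n)) * (U - M + r) * ∑ k ∈ range (n + 1), pTerm n U M r k =
      (U - M) * (U + n + r) * ∑ k ∈ range (n + 1), pTerm n (U - 1) M r k +
        (M + n) * (U - M + 2 * r) * ∑ k ∈ range (n + 1), pTerm n U (M - 1) r k := by
  have h := sum_pDefect n U M r
  simp only [pDefect, sum_sub_distrib, ← mul_sum] at h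
  linear_combination h

end

theorem P_eq_sum_pTerm (u d m : ℕ) :
    P u d m = ∑ k ∈ range (d - m + 1), pTerm (d - m) (u : ℚ[X]) m X k := rfl

theorem stmt19 (u d m : ℕ) (hm : 1 ≤ m) (hmu : m ≤ u) (hmd : m ≤ d) :
    ((u : ℚ[X]) + (d : ℚ[X])) * ((u : ℚ[X]) - (m : ℚ[X]) + X) * P u d m =
      ((u : ℚ[X]) - (m : ℚ[X])) * ((u : ℚ[X]) + (d : ℚ[X]) - (m : ℚ[X]) + X) * P (u - 1) d m +
        (d : ℚ[X]) * ((u : ℚ[X]) - (m : ℚ[X]) + 2 * X) * P u (d - 1) (m - 1) := by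
  have key := sum_pTerm_recurrence (d - m) (u : ℚ[X]) m X
  rw [P_eq_sum_pTerm, P_eq_sum_pTerm, P_eq_sum_pTerm, show d - 1 - (m - 1) = d - m by omega,
    Nat.cast_sub (hm.trans hmu), Nat.cast_sub hm]
  rw [Nat.cast_sub hmd] at key
  push_cast at key ⊢
  linear_combination key
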